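/- arXiv:0804.4164 — 4 statements merged into one kernel-verified Lean document; each statement's English description precedes it below -/
import Mathlib

section
/- Let R be an integral domain that is a finitely generated ℂ-algebra (the coordinate ring of an irreducible affine complex variety), let M be a finitely generated R-module, and let j ≥ 1. Then there exists a nonzero element f ∈ R such that for every maximal ideal 𝔪 of R with f ∉ 𝔪, the module Tor_j^R(M, R/𝔪) is zero. -/
/-!
By generic freeness some `f ≠ 0` makes `M_f` free over `R_f`, hence flat over `R`. Compute
`Tor_j(M, R/𝔪)` as `H_j(M ⊗ P)` for a projective resolution `P` of `R/𝔪`: since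
`M_f ⊗ P = (M ⊗ P)_f` is exact in positive degrees, every class is killed by a power of `f`.
If `f ∉ 𝔪`, then `f` acts invertibly on `R/𝔪`, hence by functoriality on `Tor_j(M, R/𝔪)`,
so this module is zero.
-/

universe u

open CategoryTheory Limits MonoidalCategory TensorProduct

theorem exists_ne_zero_flat_localizedModule_powers {R : Type*} [CommRing R] [IsDomain R]
    (M : Type*) [AddCommGroup M] [Module R M] [Module.FinitePresentation R M] :
    ∃ f : R, f ≠ 0 ∧ Module.Flat R (LocalizedModule (Submonoid.powers f) M) := by
  obtain ⟨f, hf, _, -⟩ := Module.FinitePresentation.exists_free_localizedModule_powers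
    (nonZeroDivisors R) (LocalizedModule.mkLinearMap (nonZeroDivisors R) M) (FractionRing R)
  exact ⟨f, nonZeroDivisors.ne_zero hf, Module.Flat.trans R (Localization.Away f) _⟩

theorem Function.Exact.exists_lTensor_eq_smul_of_isLocalizedModule {R : Type*} [CommRing R]
    (S : Submonoid R) {M M' N₁ N₂ N₃ : Type*} [AddCommGroup M] [Module R M] [AddCommGroup M']
    [Module R M'] [Module.Flat R M'] [AddCommGroup N₁] [Module R N₁] [AddCommGroup N₂]
    [Module R N₂] [AddCommGroup N₃] [Module R N₃] (g : M →ₗ[R] M') [IsLocalizedModule S g]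
    {u : N₁ →ₗ[R] N₂} {v : N₂ →ₗ[R] N₃} (huv : Function.Exact u v)
    {x : M ⊗[R] N₂} (hx : v.lTensor M x = 0) :
    ∃ s : S, ∃ y : M ⊗[R] N₁, u.lTensor M y = (s : R) • x := by
  have : IsLocalizedModule S (g.rTensor N₁) := IsLocalizedModule.rTensor (R := R) (A := R) S g
  have : IsLocalizedModule S (g.rTensor N₂) := IsLocalizedModule.rTensor (R := R) (A := R) S g
  obtain ⟨w, hw⟩ : g.rTensor N₂ x ∈ LinearMap.range (u.lTensor M') := by
    rw [← LinearMap.exact_iff.mp (Module.Flat.lTensor_exact M' huv), LinearMap.mem_ker,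
      ← LinearMap.comp_apply, LinearMap.lTensor_comp_rTensor, ← LinearMap.rTensor_comp_lTensor,
      LinearMap.comp_apply, hx, map_zero]
  obtain ⟨⟨z, t⟩, hz⟩ := IsLocalizedModule.surj S (g.rTensor N₁) w
  have : g.rTensor N₂ ((t : R) • x) = g.rTensor N₂ (u.lTensor M z) := by
    rw [map_smul, ← hw, ← map_smul, ← LinearMap.comp_apply, LinearMap.rTensor_comp_lTensor,
      ← LinearMap.lTensor_comp_rTensor, LinearMap.comp_apply, ← hz]
    rfl
  obtain ⟨c, hc⟩ := IsLocalizedModule.exists_of_eq (S := S) this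
  refine ⟨c * t, (c : R) • z, ?_⟩
  rw [map_smul, Submonoid.coe_mul, mul_smul]
  exact hc.symm

theorem CategoryTheory.ShortComplex.moduleCat_exists_smul_homology_eq_zero {R : Type*}
    [CommRing R] (S : ShortComplex (ModuleCat R)) (T : Submonoid R)
    (h : ∀ x₂ : S.X₂, S.g x₂ = 0 → ∃ t : T, ∃ x₁ : S.X₁, S.f x₁ = (t : R) • x₂)
    (z : S.homology) : ∃ t : T, (t : R) • z = 0 := by
  obtain ⟨c, rfl⟩ := (ModuleCat.epi_iff_surjective S.homologyπ).mp inferInstance z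
  obtain ⟨t, x₁, hx₁⟩ :=
    h (S.iCycles c) (by rw [← ConcreteCategory.comp_apply, S.iCycles_g]; rfl)
  have hc : S.toCycles x₁ = (t : R) • c :=
    (ModuleCat.mono_iff_injective S.iCycles).mp inferInstance <| by
      rw [← ConcreteCategory.comp_apply, S.toCycles_i, hx₁, map_smul]
  refine ⟨t, ?_⟩
  rw [← map_smul, ← hc, ← ConcreteCategory.comp_apply, S.toCycles_comp_homologyπ]
  rfl

theorem ModuleCat.isZero_of_isIso_smul {R : Type*} [CommRing R] {X : ModuleCat R} (r : R)
    [IsIso (r • 𝟙 X)] (h : ∀ x : X, ∃ k : ℕ, r ^ k • x = 0) : IsZero X := by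
  have reg : IsSMulRegular X r := (ModuleCat.mono_iff_injective (r • 𝟙 X)).mp inferInstance
  have : Subsingleton X := subsingleton_of_forall_eq 0 fun x ↦ by
    obtain ⟨k, hk⟩ := h x
    exact reg.pow k (show r ^ k • x = r ^ k • 0 by rw [hk, smul_zero])
  exact isZero_of_subsingleton X

theorem HomologicalComplex.homologyMap_smul {R C ι : Type*} [Semiring R] [Category* C]
    [Preadditive C] [Linear R C] {c : ComplexShape ι} {K L : HomologicalComplex C c}
    (φ : K ⟶ L) (r : R) (i : ι) [K.HasHomology i] [L.HasHomology i] :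
    homologyMap (r • φ) i = r • homologyMap φ i :=
  ShortComplex.homologyMap_smul ((shortComplexFunctor C c i).map φ) r

theorem CategoryTheory.Functor.leftDerived_map_smul_id {R C D : Type*} [Semiring R]
    [Category* C] [Category* D] [Abelian C] [HasProjectiveResolutions C] [Abelian D]
    [CategoryTheory.Linear R C] [CategoryTheory.Linear R D] (F : C ⥤ D) [F.Additive]
    [Functor.Linear R F] (n : ℕ) (X : C) (r : R) :
    (F.leftDerived n).map (r • 𝟙 X) = r • 𝟙 _ := by
  let P := projectiveResolution X
  -- `P.π.f 0` lands in `X`, and `e.hom` below in the homology, only up to defeq; hence `comp_id`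
  -- is applied by unification rather than by `rw`.
  have comm : (r • 𝟙 P.complex).f 0 ≫ P.π.f 0 = P.π.f 0 ≫ (r • 𝟙 X) := by
    rw [HomologicalComplex.smul_f_apply, HomologicalComplex.id_f, Linear.smul_comp,
      Category.id_comp]
    exact ((Linear.comp_smul _ _ _ (P.π.f 0) r (𝟙 X)).trans
      (congrArg (r • ·) (Category.comp_id _))).symm
  let e := P.isoLeftDerivedObj F n
  rw [← cancel_mono e.hom, P.isoLeftDerivedObj_hom_naturality (r • 𝟙 X) P _ comm]
  have hmap : (F.mapHomologicalComplex _ ⋙ HomologicalComplex.homologyFunctor D _ n).map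
      (r • 𝟙 P.complex) = r • 𝟙 _ := by
    simp only [Functor.comp_map, Functor.map_smul, Functor.map_id,
      HomologicalComplex.homologyFunctor_map, HomologicalComplex.homologyMap_smul,
      HomologicalComplex.homologyMap_id]
    rfl
  rw [hmap, Linear.comp_smul, Linear.smul_comp]
  exact congrArg (r • ·) ((Category.comp_id _).trans (Category.id_comp _).symm)

theorem Ideal.Quotient.isIso_smul_id_of_notMem {R : Type*} [CommRing R] (𝔪 : Ideal R)
    [𝔪.IsMaximal] {f : R} (hf : f ∉ 𝔪) : IsIso (f • 𝟙 (ModuleCat.of R (R ⧸ 𝔪))) := by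
  let := Ideal.Quotient.field 𝔪
  have hu : IsUnit (Ideal.Quotient.mk 𝔪 f) :=
    isUnit_iff_ne_zero.mpr (Ideal.Quotient.eq_zero_iff_mem.not.mpr hf)
  rw [ConcreteCategory.isIso_iff_bijective]
  convert hu.unit.mulLeft_bijective using 1
  ext x
  exact Algebra.smul_def f x

theorem isZero_Tor_succ_of_isIso_smul {R : Type u} [CommRing R] (f : R) (M : ModuleCat.{u} R)
    [Module.Flat R (LocalizedModule (Submonoid.powers f) M)] (Y : ModuleCat.{u} R)
    [IsIso (f • 𝟙 Y)] (n : ℕ) : IsZero (((Tor (ModuleCat.{u} R) (n + 1)).obj M).obj Y) := by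
  let F := (tensoringLeft (ModuleCat.{u} R)).obj M
  let P := projectiveResolution Y
  let e := P.isoLeftDerivedObj F (n + 1)
  change IsZero ((F.leftDerived (n + 1)).obj Y)
  have : IsIso (f • 𝟙 ((F.leftDerived (n + 1)).obj Y)) := by
    rw [← F.leftDerived_map_smul_id]
    infer_instance
  have hP : Function.Exact (P.complex.sc (n + 1)).f (P.complex.sc (n + 1)).g :=
    LinearMap.exact_iff.mpr (P.complex_exactAt_succ n).moduleCat_range_eq_ker.symm
  refine ModuleCat.isZero_of_isIso_smul f fun t ↦ ?_
  obtain ⟨⟨_, k, rfl⟩, hk⟩ :=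
    (((F.mapHomologicalComplex _).obj P.complex).sc (n + 1)).moduleCat_exists_smul_homology_eq_zero
      (Submonoid.powers f) (fun _ hx ↦ hP.exists_lTensor_eq_smul_of_isLocalizedModule _
        (LocalizedModule.mkLinearMap (Submonoid.powers f) M) hx) (e.hom t)
  refine ⟨k, (ModuleCat.mono_iff_injective e.hom).mp inferInstance ?_⟩
  rwa [map_smul, map_zero]

/-- **Generic vanishing of Tor for finitely generated modules.**
Let `R` be an integral domain that is a finitely generated `ℂ`-algebra, let `M` be a
finitely generated `R`-module, and let `j ≥ 1`.  Then there is a nonzero `f ∈ R` such that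
for every maximal ideal `𝔪` of `R` with `f ∉ 𝔪`, the module `Tor_j^R(M, R/𝔪)` vanishes. -/
theorem generic_tor_vanishing_of_finite
    (R : Type) [CommRing R] [IsDomain R] [Algebra ℂ R] [Algebra.FiniteType ℂ R]
    (M : Type) [AddCommGroup M] [Module R M] [Module.Finite R M]
    (j : ℕ) (hj : 1 ≤ j) :
    ∃ f : R, f ≠ 0 ∧ ∀ 𝔪 : Ideal R, 𝔪.IsMaximal → f ∉ 𝔪 →
      Limits.IsZero (((Tor (ModuleCat R) j).obj (ModuleCat.of R M)).obj
        (ModuleCat.of R (R ⧸ 𝔪))) := by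
  have : IsNoetherianRing R := Algebra.FiniteType.isNoetherianRing ℂ R
  have : Module.FinitePresentation R M := Module.finitePresentation_of_finite R M
  obtain ⟨f, hf, _⟩ := exists_ne_zero_flat_localizedModule_powers (R := R) M
  refine ⟨f, hf, fun 𝔪 _ hf𝔪 ↦ ?_⟩
  have := Ideal.Quotient.isIso_smul_id_of_notMem 𝔪 hf𝔪
  obtain ⟨n, rfl⟩ := Nat.exists_eq_add_of_le' hj
  exact isZero_Tor_succ_of_isIso_smul f (ModuleCat.of R M) _ n
end

section
/- Let R be an integral domain that is a finitely generated ℂ-algebra, let M be a countably generated R-module, and let j ≥ 1. Then there exists a countable family (f_i)_{i∈ℕ} of nonzero elements of R such that for every maximal ideal 𝔪 of R satisfying f_i ∉ 𝔪 for all i, the module Tor_j^R(M, R/𝔪) is zero. -/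
/-!
Write `M` as an increasing union of finitely generated submodules `Mₙ`. Over a domain, a finitely
generated module `N` has some `g ≠ 0` for which `g • id_N` factors through a free module: take a
maximal linearly independent family, the quotient by its span is finitely generated torsion.
Fix such `gₙ` for each `Mₙ` and a maximal ideal `𝔪` avoiding them all, and compute
`Tor_j(M, R/𝔪)` with a projective resolution `P` of `R/𝔪`. A cycle of `M ⊗ P` comes from a cycle
of some `Mₙ ⊗ P`, so `gₙ` times it is a boundary, as `F ⊗ P` is exact for free `F`. Every
`m ∈ 𝔪` kills `R/𝔪`, hence acts null-homotopically on `P` and multiplies cycles into boundaries.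
As `gₙ` and `𝔪` generate the unit ideal, every cycle is a boundary.
-/

open CategoryTheory LinearMap TensorProduct

universe u

def Module.SmulIdFactorsThroughFree (R : Type*) (N : Type*) [CommRing R] [AddCommGroup N]
    [Module R N] (g : R) : Prop :=
  ∃ (s : Set N) (φ : N →ₗ[R] s →₀ R),
    Finsupp.linearCombination R ((↑) : s → N) ∘ₗ φ = g • LinearMap.id

theorem Module.exists_smulIdFactorsThroughFree {R N : Type*} [CommRing R] [IsDomain R]
    [AddCommGroup N] [Module R N] [Module.Finite R N] :
    ∃ g : R, g ≠ 0 ∧ Module.SmulIdFactorsThroughFree R N g := by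
  obtain ⟨s, hcard, hs⟩ := exists_set_linearIndependent_of_isDomain R N
  have htors : Module.IsTorsion R (N ⧸ Submodule.span R s) := by
    rw [← Module.rank_eq_zero_iff_isTorsion]
    have := rank_quotient_add_rank_of_isDomain (Submodule.span R s)
    rw [rank_span_set hs, hcard] at this
    exact Cardinal.eq_of_add_eq_add_right (this.trans (zero_add _).symm)
      (Module.rank_lt_aleph0 R N)
  obtain ⟨g, hg, hg0⟩ := Submodule.annihilator_top_inter_nonZeroDivisors htors
  have hgs : ∀ x : N, g • x ∈ Submodule.span R (Set.range ((↑) : s → N)) := by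
    intro x
    rw [Subtype.range_coe, ← Submodule.Quotient.mk_eq_zero, Submodule.Quotient.mk_smul]
    exact Submodule.mem_annihilator.mp hg _ Submodule.mem_top
  refine ⟨g, nonZeroDivisors.ne_zero hg0, s,
    hs.linearIndependent.repr ∘ₗ (g • LinearMap.id).codRestrict _ hgs, ?_⟩
  ext x
  simp

theorem Submodule.mem_of_smul_mem_of_notMem_isMaximal {R V : Type*} [CommRing R]
    [AddCommGroup V] [Module R V] {Q : Submodule R V} {𝔪 : Ideal R} (h𝔪 : 𝔪.IsMaximal)
    {g : R} (hg : g ∉ 𝔪) {z : V} (hgz : g • z ∈ Q) (h𝔪z : ∀ m ∈ 𝔪, m • z ∈ Q) : z ∈ Q := by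
  obtain ⟨a, m, hm, hagm⟩ := h𝔪.exists_inv hg
  rw [← one_smul R z, ← hagm, add_smul, mul_smul]
  exact Q.add_mem (Q.smul_mem a hgz) (h𝔪z m hm)

theorem TensorProduct.exists_mem_range_rTensor_of_monotone {R M Q : Type*} [CommRing R]
    [AddCommGroup M] [Module R M] [AddCommGroup Q] [Module R Q] {N : ℕ → Submodule R M}
    (hN : Monotone N) (hcover : ∀ x, ∃ n, x ∈ N n) (z : M ⊗[R] Q) :
    ∃ n, z ∈ range (rTensor Q (N n).subtype) := by
  have hrange : Monotone fun n => range (rTensor Q (N n).subtype) := fun a b hab => by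
    dsimp only
    rw [← Submodule.subtype_comp_inclusion _ _ (hN hab), rTensor_comp]
    exact range_comp_le_range _ _
  induction z using TensorProduct.induction_on with
  | zero => exact ⟨0, zero_mem _⟩
  | tmul x q =>
    obtain ⟨n, hn⟩ := hcover x
    exact ⟨n, ⟨⟨x, hn⟩ ⊗ₜ q, rfl⟩⟩
  | add x y hx hy =>
    obtain ⟨a, ha⟩ := hx
    obtain ⟨b, hb⟩ := hy
    exact ⟨max a b, add_mem (hrange (le_max_left a b) ha) (hrange (le_max_right a b) hb)⟩

namespace LinearMap

variable {R : Type*} [CommRing R] {M N F P₂ P₁ P₀ : Type*}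
  [AddCommGroup M] [Module R M] [AddCommGroup N] [Module R N] [AddCommGroup F] [Module R F]
  [AddCommGroup P₂] [Module R P₂] [AddCommGroup P₁] [Module R P₁]
  [AddCommGroup P₀] [Module R P₀]
  {d₂ : P₂ →ₗ[R] P₁} {d₁ : P₁ →ₗ[R] P₀}

theorem rTensor_mem_range_lTensor (f : N →ₗ[R] M) {z : N ⊗[R] P₁}
    (hz : z ∈ range (lTensor N d₂)) : rTensor P₁ f z ∈ range (lTensor M d₂) := by
  obtain ⟨u, rfl⟩ := hz
  refine ⟨rTensor P₂ f u, ?_⟩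
  rw [← LinearMap.comp_apply, ← LinearMap.comp_apply, lTensor_comp_rTensor, rTensor_comp_lTensor]

theorem smul_mem_range_lTensor_of_comp_eq_smul_id [Module.Flat R F]
    (hd : Function.Exact d₂ d₁) {φ : N →ₗ[R] F} {ψ : F →ₗ[R] N} {g : R}
    (hψφ : ψ ∘ₗ φ = g • LinearMap.id)
    {z : N ⊗[R] P₁} (hz : lTensor N d₁ z = 0) : g • z ∈ range (lTensor N d₂) := by
  have hφz : lTensor F d₁ (rTensor P₁ φ z) = 0 := by
    rw [← LinearMap.comp_apply, lTensor_comp_rTensor, ← rTensor_comp_lTensor,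
      LinearMap.comp_apply, hz, map_zero]
  have hgz : rTensor P₁ ψ (rTensor P₁ φ z) = g • z := by
    rw [← LinearMap.comp_apply, ← rTensor_comp, hψφ, rTensor_smul, rTensor_id,
      LinearMap.smul_apply, LinearMap.id_apply]
  rw [← hgz]
  exact rTensor_mem_range_lTensor ψ (((Module.Flat.lTensor_exact F hd) _).mp hφz)

theorem smul_mem_range_lTensor_of_homotopy {h₁ : P₁ →ₗ[R] P₂} {h₀ : P₀ →ₗ[R] P₁} {m : R}
    (hh : d₂ ∘ₗ h₁ + h₀ ∘ₗ d₁ = m • LinearMap.id) {z : M ⊗[R] P₁} (hz : lTensor M d₁ z = 0) :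
    m • z ∈ range (lTensor M d₂) := by
  refine ⟨lTensor M h₁ z, ?_⟩
  have := congr($(congrArg (lTensor M) hh) z)
  simpa only [lTensor_add, lTensor_comp, lTensor_smul, lTensor_id, LinearMap.add_apply,
    LinearMap.comp_apply, LinearMap.smul_apply, LinearMap.id_apply, hz, map_zero, add_zero]
    using this

theorem lTensor_rTensor_subtype_eq_zero_iff [Module.Flat R P₀] (N : Submodule R M) (z : N ⊗[R] P₁) :
    lTensor M d₁ (rTensor P₁ N.subtype z) = 0 ↔ lTensor N d₁ z = 0 := by
  rw [← LinearMap.comp_apply, lTensor_comp_rTensor, ← rTensor_comp_lTensor, LinearMap.comp_apply,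
    map_eq_zero_iff _ (Module.Flat.rTensor_preserves_injective_linearMap _ N.injective_subtype)]

theorem exists_smul_mem_range_lTensor_of_monotone [Module.Flat R P₀]
    (hd : Function.Exact d₂ d₁) {N : ℕ → Submodule R M} (hN : Monotone N)
    (hcover : ∀ x, ∃ n, x ∈ N n) {g : ℕ → R}
    (split : ∀ n, Module.SmulIdFactorsThroughFree R (N n) (g n))
    {z : M ⊗[R] P₁} (hz : lTensor M d₁ z = 0) : ∃ n, g n • z ∈ range (lTensor M d₂) := by
  obtain ⟨n, z, rfl⟩ := TensorProduct.exists_mem_range_rTensor_of_monotone hN hcover z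
  obtain ⟨s, φ, hsplit⟩ := split n
  rw [lTensor_rTensor_subtype_eq_zero_iff] at hz
  refine ⟨n, ?_⟩
  rw [← map_smul]
  exact rTensor_mem_range_lTensor _ (smul_mem_range_lTensor_of_comp_eq_smul_id hd hsplit hz)

theorem exact_lTensor_of_homotopy_of_split [Module.Flat R P₀] (hd : Function.Exact d₂ d₁)
    {𝔪 : Ideal R} (h𝔪 : 𝔪.IsMaximal)
    (homotopy : ∀ m ∈ 𝔪, ∃ (h₁ : P₁ →ₗ[R] P₂) (h₀ : P₀ →ₗ[R] P₁),
      d₂ ∘ₗ h₁ + h₀ ∘ₗ d₁ = m • LinearMap.id)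
    {N : ℕ → Submodule R M} (hN : Monotone N) (hcover : ∀ x, ∃ n, x ∈ N n) {g : ℕ → R}
    (hg : ∀ n, g n ∉ 𝔪) (split : ∀ n, Module.SmulIdFactorsThroughFree R (N n) (g n)) :
    Function.Exact (lTensor M d₂) (lTensor M d₁) := by
  rw [LinearMap.exact_iff]
  refine le_antisymm (fun z hz => ?_) ?_
  · obtain ⟨n, hn⟩ := exists_smul_mem_range_lTensor_of_monotone hd hN hcover split hz
    refine Submodule.mem_of_smul_mem_of_notMem_isMaximal h𝔪 (hg n) hn fun m hm => ?_
    obtain ⟨h₁, h₀, hh⟩ := homotopy m hm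
    exact smul_mem_range_lTensor_of_homotopy hh hz
  · rw [LinearMap.range_le_ker_iff, ← lTensor_comp, hd.linearMap_comp_eq_zero, lTensor_zero]

end LinearMap

namespace CategoryTheory.ProjectiveResolution

variable {R : Type u} [CommRing R] {Y : ModuleCat.{u} R} (P : ProjectiveResolution Y)

theorem flat_X (i : ℕ) : Module.Flat R (P.complex.X i) :=
  have := (IsProjective.iff_projective (P.complex.X i)).mpr (P.projective i)
  Module.Flat.of_projective

theorem exact_d_hom (k : ℕ) :
    Function.Exact (P.complex.d (k + 2) (k + 1)).hom (P.complex.d (k + 1) k).hom := by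
  have h := P.complex_exactAt_succ k
  rw [HomologicalComplex.exactAt_iff' _ (k + 2) (k + 1) k (by simp) (by simp)] at h
  exact (ShortComplex.ShortExact.moduleCat_exact_iff_function_exact _).mp h

theorem smul_id_comp_π_eq_zero {m : R} (hm : m ∈ Module.annihilator R Y) :
    (m • 𝟙 P.complex) ≫ P.π = 0 := by
  ext x
  simp only [Linear.smul_comp, Category.id_comp, HomologicalComplex.smul_f_apply,
    HomologicalComplex.zero_f, ModuleCat.hom_smul, ModuleCat.hom_zero, LinearMap.smul_apply,
    LinearMap.zero_apply]
  exact Module.mem_annihilator.mp hm (P.π.f 0 x)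

theorem exists_homotopy_smul_id {m : R} (hm : m ∈ Module.annihilator R Y) (k : ℕ) :
    ∃ (h₁ : P.complex.X (k + 1) →ₗ[R] P.complex.X (k + 2))
      (h₀ : P.complex.X k →ₗ[R] P.complex.X (k + 1)),
      (P.complex.d (k + 2) (k + 1)).hom ∘ₗ h₁ + h₀ ∘ₗ (P.complex.d (k + 1) k).hom =
        m • LinearMap.id := by
  let H := liftHomotopyZero _ (P.smul_id_comp_π_eq_zero hm)
  refine ⟨(H.hom (k + 1) (k + 2)).hom, (H.hom k (k + 1)).hom, ?_⟩
  have hc := H.comm (k + 1)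
  rw [dNext_eq H.hom (show (ComplexShape.down ℕ).Rel (k + 1) k by simp),
    prevD_eq H.hom (show (ComplexShape.down ℕ).Rel (k + 2) (k + 1) by simp)] at hc
  have := congrArg ModuleCat.Hom.hom hc
  simp only [HomologicalComplex.smul_f_apply, HomologicalComplex.id_f, ModuleCat.hom_smul,
    ModuleCat.hom_id, HomologicalComplex.zero_f, add_zero, ModuleCat.hom_add,
    ModuleCat.hom_comp] at this
  exact (add_comm _ _).trans this.symm

theorem isZero_Tor_succ_of_exact_lTensor (M : Type u) [AddCommGroup M] [Module R M] (k : ℕ)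
    (h : Function.Exact (lTensor M (P.complex.d (k + 2) (k + 1)).hom)
      (lTensor M (P.complex.d (k + 1) k).hom)) :
    Limits.IsZero (((Tor (ModuleCat R) (k + 1)).obj (ModuleCat.of R M)).obj Y) := by
  let F := (MonoidalCategory.tensoringLeft (ModuleCat R)).obj (ModuleCat.of R M)
  refine Limits.IsZero.of_iso ?_ (P.isoLeftDerivedObj F (k + 1))
  refine (HomologicalComplex.exactAt_iff_isZero_homology _ _).mp ?_
  rw [HomologicalComplex.exactAt_iff' _ (k + 2) (k + 1) k (by simp) (by simp),
    ShortComplex.ShortExact.moduleCat_exact_iff_function_exact]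
  exact h

end CategoryTheory.ProjectiveResolution

theorem Submodule.exists_monotone_finite_of_countable_span {R M : Type*} [Semiring R]
    [AddCommMonoid M] [Module R M] {S : Set M} (hS : S.Countable) (hspan : span R S = ⊤) :
    ∃ N : ℕ → Submodule R M, Monotone N ∧ (∀ n, Module.Finite R (N n)) ∧ ∀ x, ∃ n, x ∈ N n := by
  obtain ⟨s, hs⟩ := (hS.insert 0).exists_eq_range (Set.insert_nonempty 0 S)
  have hmono : Monotone fun n => span R (s '' Set.Iio n) := fun a b hab =>
    span_mono (Set.image_mono (Set.Iio_subset_Iio hab))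
  refine ⟨_, hmono, fun n => Module.Finite.iff_fg.mpr (fg_span ((Set.finite_Iio n).image s)),
    fun x => (mem_iSup_of_directed _ hmono.directed_le).mp ?_⟩
  rw [← span_iUnion, ← Set.image_iUnion, Set.iUnion_Iio, Set.image_univ, ← hs, span_insert_zero,
    hspan]
  exact mem_top

theorem generic_tor_vanishing_of_countably_generated_general
    (R : Type) [CommRing R] [IsDomain R]
    (M : Type) [AddCommGroup M] [Module R M]
    (hM : ∃ S : Set M, S.Countable ∧ Submodule.span R S = ⊤)
    (j : ℕ) (hj : 1 ≤ j) :
    ∃ f : ℕ → R, (∀ i, f i ≠ 0) ∧ ∀ 𝔪 : Ideal R, 𝔪.IsMaximal → (∀ i, f i ∉ 𝔪) →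
      Limits.IsZero (((Tor (ModuleCat R) j).obj (ModuleCat.of R M)).obj
        (ModuleCat.of R (R ⧸ 𝔪))) := by
  obtain ⟨S, hS, hspan⟩ := hM
  obtain ⟨N, hN, hfin, hcover⟩ := Submodule.exists_monotone_finite_of_countable_span hS hspan
  choose g hg split using fun n => Module.exists_smulIdFactorsThroughFree (R := R) (N := N n)
  refine ⟨g, hg, fun 𝔪 h𝔪 hg𝔪 => ?_⟩
  obtain ⟨k, rfl⟩ := Nat.exists_eq_add_of_le' hj
  let P : ProjectiveResolution (ModuleCat.of R (R ⧸ 𝔪)) := HasProjectiveResolution.out.some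
  have := P.flat_X k
  have homotopy (m : R) (hm : m ∈ 𝔪) :=
    P.exists_homotopy_smul_id (by rwa [Ideal.annihilator_quotient]) k
  exact P.isZero_Tor_succ_of_exact_lTensor M k
    (exact_lTensor_of_homotopy_of_split (P.exact_d_hom k) h𝔪 homotopy hN hcover hg𝔪 split)

/-- **Generic vanishing of Tor for countably generated modules.**
Let `R` be an integral domain that is a finitely generated `ℂ`-algebra, let `M` be a
countably generated `R`-module, and let `j ≥ 1`.  Then there is a countable family
`(f i)` of nonzero elements of `R` such that for every maximal ideal `𝔪` of `R` avoiding
all the `f i`, the module `Tor_j^R(M, R/𝔪)` vanishes. -/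
theorem generic_tor_vanishing_of_countably_generated
    (R : Type) [CommRing R] [IsDomain R] [Algebra ℂ R] [Algebra.FiniteType ℂ R]
    (M : Type) [AddCommGroup M] [Module R M]
    (hM : ∃ S : Set M, S.Countable ∧ Submodule.span R S = ⊤)
    (j : ℕ) (hj : 1 ≤ j) :
    ∃ f : ℕ → R, (∀ i, f i ≠ 0) ∧ ∀ 𝔪 : Ideal R, 𝔪.IsMaximal → (∀ i, f i ∉ 𝔪) →
      Limits.IsZero (((Tor (ModuleCat R) j).obj (ModuleCat.of R M)).obj
        (ModuleCat.of R (R ⧸ 𝔪))) :=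
  generic_tor_vanishing_of_countably_generated_general R M hM j hj
end

section
/- Let R be an integral domain that is a finitely generated ℂ-algebra with fraction field F, and let d be an a × b matrix with entries in R whose rank, viewed as a matrix over F, equals r. Then there exists a nonzero element f ∈ R such that for every maximal ideal 𝔪 of R with f ∉ 𝔪, the matrix over the residue field R/𝔪 obtained by reducing the entries of d modulo 𝔪 also has rank r. -/
/-!
Over a field, the rank of a matrix is the largest size of a nonvanishing minor. Choose an
`r × r` minor of `d` that is nonzero over the fraction field and let `f` be its determinant.
If `f ∉ 𝔪`, this minor survives reduction modulo `𝔪`, so the reduced rank is at least `r`; and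
any nonvanishing minor of the reduction is already nonzero in `R`, hence over the fraction field,
so the reduced rank is at most `r`.
-/

namespace Matrix

variable {m n R K L : Type*}

theorem det_submatrix_map [CommRing R] [CommRing K] (f : R →+* K) (A : Matrix m n R) {r : ℕ}
    (rows : Fin r → m) (cols : Fin r → n) :
    ((A.map f).submatrix rows cols).det = f (A.submatrix rows cols).det := by
  rw [submatrix_map, RingHom.map_det]
  rfl

section Field

variable [Fintype n] [Field K]

theorem exists_linearIndependent_cols_of_le_rank [Finite m] (A : Matrix m n K) {r : ℕ}
    (h : r ≤ A.rank) :
    ∃ cols : Fin r → n, LinearIndependent K (fun j ↦ A.col (cols j)) := by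
  obtain ⟨κ, sel, -, hspan, hli⟩ := exists_linearIndependent' K A.col
  have : Fintype κ := @Fintype.ofFinite κ hli.finite
  have hcard : r ≤ Fintype.card κ := by
    rwa [rank_eq_finrank_span_cols, ← hspan, finrank_span_eq_card hli] at h
  obtain ⟨e⟩ := Function.Embedding.nonempty_of_card_le (α := Fin r) (by simpa using hcard)
  exact ⟨sel ∘ e, hli.comp e e.injective⟩

theorem exists_det_submatrix_ne_zero_of_le_rank [Fintype m] (A : Matrix m n K) {r : ℕ}
    (h : r ≤ A.rank) :
    ∃ (rows : Fin r → m) (cols : Fin r → n), (A.submatrix rows cols).det ≠ 0 := by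
  obtain ⟨cols, hcols⟩ := A.exists_linearIndependent_cols_of_le_rank h
  have hrank : (A.submatrix id cols)ᵀ.rank = r := by
    rw [LinearIndependent.rank_matrix (M := (A.submatrix id cols)ᵀ) hcols, Fintype.card_fin]
  obtain ⟨rows, hrows⟩ :=
    (A.submatrix id cols)ᵀ.exists_linearIndependent_cols_of_le_rank hrank.ge
  refine ⟨rows, cols, ?_⟩
  rw [← isUnit_iff_ne_zero, ← isUnit_iff_isUnit_det]
  exact linearIndependent_rows_iff_isUnit.1 hrows

theorem le_rank_of_det_submatrix_ne_zero (A : Matrix m n K) {r : ℕ} (rows : Fin r → m)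
    (cols : Fin r → n) (h : (A.submatrix rows cols).det ≠ 0) : r ≤ A.rank := by
  have hunit : IsUnit (A.submatrix rows cols) := (isUnit_iff_isUnit_det _).2 h.isUnit
  simpa [rank_of_isUnit _ hunit] using A.rank_submatrix_le rows cols

theorem rank_map_le_rank_map_of_injective [Fintype m] [CommRing R] [Field L] (A : Matrix m n R)
    {f : R →+* K} (hf : Function.Injective f) (g : R →+* L) :
    (A.map g).rank ≤ (A.map f).rank := by
  obtain ⟨rows, cols, hg⟩ := (A.map g).exists_det_submatrix_ne_zero_of_le_rank le_rfl
  refine (A.map f).le_rank_of_det_submatrix_ne_zero rows cols ?_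
  rw [det_submatrix_map] at hg ⊢
  exact (map_ne_zero_iff f hf).2 (ne_zero_of_map hg)

end Field

end Matrix

open Matrix

theorem generic_rank_specialization_general
    (R : Type) [CommRing R] [IsDomain R]
    (a b : ℕ) (d : Matrix (Fin a) (Fin b) R) (r : ℕ)
    (hr : (d.map (algebraMap R (FractionRing R))).rank = r) :
    ∃ f : R, f ≠ 0 ∧ ∀ 𝔪 : Ideal R, 𝔪.IsMaximal → f ∉ 𝔪 →
      (d.map (Ideal.Quotient.mk 𝔪)).rank = r := by
  obtain ⟨rows, cols, hminor⟩ := (d.map _).exists_det_submatrix_ne_zero_of_le_rank hr.ge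
  rw [det_submatrix_map] at hminor
  refine ⟨(d.submatrix rows cols).det, ne_zero_of_map hminor, fun 𝔪 _ hf ↦ ?_⟩
  let := Ideal.Quotient.field 𝔪
  refine le_antisymm
    (hr ▸ d.rank_map_le_rank_map_of_injective (IsFractionRing.injective R _) _) ?_
  refine d.map _ |>.le_rank_of_det_submatrix_ne_zero rows cols ?_
  rw [det_submatrix_map]
  exact mt Ideal.Quotient.eq_zero_iff_mem.1 hf

/-- **Generic rank specialization.**
Let `R` be an integral domain that is a finitely generated `ℂ`-algebra with fraction
field `F`, and let `d` be an `a × b` matrix over `R` whose rank over `F` is `r`.  Then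
there is a nonzero `f ∈ R` such that for every maximal ideal `𝔪` of `R` with `f ∉ 𝔪`,
the reduction of `d` modulo `𝔪` has rank `r` over the residue field `R/𝔪`. -/
theorem generic_rank_specialization
    (R : Type) [CommRing R] [IsDomain R] [Algebra ℂ R] [Algebra.FiniteType ℂ R]
    (a b : ℕ) (d : Matrix (Fin a) (Fin b) R) (r : ℕ)
    (hr : (d.map (algebraMap R (FractionRing R))).rank = r) :
    ∃ f : R, f ≠ 0 ∧ ∀ 𝔪 : Ideal R, 𝔪.IsMaximal → f ∉ 𝔪 →
      (d.map (Ideal.Quotient.mk 𝔪)).rank = r :=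
  generic_rank_specialization_general R a b d r hr
end

section
/- Let R be an integral domain with fraction field F, and let P₂ → P₁ → P₀ be R-linear maps d₂ : P₂ → P₁ and d₁ : P₁ → P₀ between finite free R-modules with d₁ ∘ d₂ = 0, such that the induced sequence P₂ ⊗_R F → P₁ ⊗_R F → P₀ ⊗_R F is exact at P₁ ⊗_R F; let r₁ and r₂ denote the ranks of d₁ ⊗ 1_F and d₂ ⊗ 1_F. If 𝔪 is a maximal ideal of R with residue field κ = R/𝔪 such that d₁ ⊗ 1_κ has rank r₁ and d₂ ⊗ 1_κ has rank r₂, then the sequence P₂ ⊗_R κ → P₁ ⊗_R κ → P₀ ⊗_R κ is exact at P₁ ⊗_R κ. -/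
/-! Over a field, a complex is exact at the middle term exactly when the two ranks add up to the
dimension of the middle term. Both `F ⊗ P₁` and `κ ⊗ P₁` have dimension `rank_R P₁`, so exactness
over `F` forces `r₁ + r₂ = rank_R P₁`, which is the exactness criterion over `κ`. -/

open Module

section DivisionRing

variable {K V W U : Type*} [DivisionRing K] [AddCommGroup V] [AddCommGroup W] [AddCommGroup U]
  [Module K V] [Module K W] [Module K U] [FiniteDimensional K W]
  {f : V →ₗ[K] W} {g : W →ₗ[K] U}

theorem LinearMap.finrank_range_add_finrank_range_of_range_eq_ker
    (h : LinearMap.range f = LinearMap.ker g) :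
    finrank K (LinearMap.range f) + finrank K (LinearMap.range g) = finrank K W := by
  rw [h, add_comm, LinearMap.finrank_range_add_finrank_ker]

theorem LinearMap.range_eq_ker_of_finrank_range_add_finrank_range
    (hle : LinearMap.range f ≤ LinearMap.ker g)
    (h : finrank K (LinearMap.range f) + finrank K (LinearMap.range g) = finrank K W) :
    LinearMap.range f = LinearMap.ker g := by
  refine Submodule.eq_of_le_of_finrank_eq hle ?_
  have := LinearMap.finrank_range_add_finrank_ker g
  omega

end DivisionRing

theorem LinearMap.range_baseChange_le_ker_baseChange {R A M N P : Type*} [CommRing R]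
    [Ring A] [Algebra R A] [AddCommGroup M] [AddCommGroup N] [AddCommGroup P]
    [Module R M] [Module R N] [Module R P] {f : M →ₗ[R] N} {g : N →ₗ[R] P}
    (h : g.comp f = 0) :
    LinearMap.range (f.baseChange A) ≤ LinearMap.ker (g.baseChange A) := by
  rintro _ ⟨x, rfl⟩
  rw [LinearMap.mem_ker, ← LinearMap.comp_apply, ← LinearMap.baseChange_comp, h,
    LinearMap.baseChange_zero, LinearMap.zero_apply]

theorem exactness_specialization_general
    (R : Type) [CommRing R] [IsDomain R]
    (P₀ P₁ P₂ : Type) [AddCommGroup P₀] [AddCommGroup P₁] [AddCommGroup P₂]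
    [Module R P₀] [Module R P₁] [Module R P₂]
    [Module.Free R P₁]
    [Module.Finite R P₁]
    (d₁ : P₁ →ₗ[R] P₀) (d₂ : P₂ →ₗ[R] P₁) (hdd : d₁.comp d₂ = 0)
    (hexact : LinearMap.range (d₂.baseChange (FractionRing R)) =
      LinearMap.ker (d₁.baseChange (FractionRing R)))
    (r₁ r₂ : ℕ)
    (hr₁ : Module.finrank (FractionRing R)
      (LinearMap.range (d₁.baseChange (FractionRing R))) = r₁)
    (hr₂ : Module.finrank (FractionRing R)
      (LinearMap.range (d₂.baseChange (FractionRing R))) = r₂)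
    (𝔪 : Ideal R) (h𝔪 : 𝔪.IsMaximal)
    (hκ₁ : Module.finrank (R ⧸ 𝔪) (LinearMap.range (d₁.baseChange (R ⧸ 𝔪))) = r₁)
    (hκ₂ : Module.finrank (R ⧸ 𝔪) (LinearMap.range (d₂.baseChange (R ⧸ 𝔪))) = r₂) :
    LinearMap.range (d₂.baseChange (R ⧸ 𝔪)) = LinearMap.ker (d₁.baseChange (R ⧸ 𝔪)) := by
  let : Field (R ⧸ 𝔪) := Ideal.Quotient.field 𝔪
  have hF := LinearMap.finrank_range_add_finrank_range_of_range_eq_ker hexact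
  rw [hr₁, hr₂, finrank_baseChange] at hF
  refine LinearMap.range_eq_ker_of_finrank_range_add_finrank_range
    (LinearMap.range_baseChange_le_ker_baseChange hdd) ?_
  rw [hκ₁, hκ₂, finrank_baseChange, hF]

/-- **Exactness specialization.**
Let `R` be an integral domain with fraction field `F`, and let
`d₂ : P₂ → P₁`, `d₁ : P₁ → P₀` be `R`-linear maps between finite free `R`-modules with
`d₁ ∘ d₂ = 0`, such that the base-changed sequence over `F` is exact at the middle term;
let `r₁`, `r₂` be the ranks of `d₁ ⊗ 1_F` and `d₂ ⊗ 1_F`.  If `𝔪` is a maximal ideal of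
`R` with residue field `κ = R/𝔪` such that `d₁ ⊗ 1_κ` has rank `r₁` and `d₂ ⊗ 1_κ` has
rank `r₂`, then the base-changed sequence over `κ` is exact at the middle term. -/
theorem exactness_specialization
    (R : Type) [CommRing R] [IsDomain R]
    (P₀ P₁ P₂ : Type) [AddCommGroup P₀] [AddCommGroup P₁] [AddCommGroup P₂]
    [Module R P₀] [Module R P₁] [Module R P₂]
    [Module.Free R P₀] [Module.Free R P₁] [Module.Free R P₂]
    [Module.Finite R P₀] [Module.Finite R P₁] [Module.Finite R P₂]
    (d₁ : P₁ →ₗ[R] P₀) (d₂ : P₂ →ₗ[R] P₁) (hdd : d₁.comp d₂ = 0)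
    (hexact : LinearMap.range (d₂.baseChange (FractionRing R)) =
      LinearMap.ker (d₁.baseChange (FractionRing R)))
    (r₁ r₂ : ℕ)
    (hr₁ : Module.finrank (FractionRing R)
      (LinearMap.range (d₁.baseChange (FractionRing R))) = r₁)
    (hr₂ : Module.finrank (FractionRing R)
      (LinearMap.range (d₂.baseChange (FractionRing R))) = r₂)
    (𝔪 : Ideal R) (h𝔪 : 𝔪.IsMaximal)
    (hκ₁ : Module.finrank (R ⧸ 𝔪) (LinearMap.range (d₁.baseChange (R ⧸ 𝔪))) = r₁)
    (hκ₂ : Module.finrank (R ⧸ 𝔪) (LinearMap.range (d₂.baseChange (R ⧸ 𝔪))) = r₂) :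
    LinearMap.range (d₂.baseChange (R ⧸ 𝔪)) = LinearMap.ker (d₁.baseChange (R ⧸ 𝔪)) :=
  exactness_specialization_general R P₀ P₁ P₂ d₁ d₂ hdd hexact r₁ r₂ hr₁ hr₂ 𝔪 h𝔪 hκ₁ hκ₂
end
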